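/- Let p, ν ∈ ℕ with ν < p. Then every twice-differentiable solution a : (−1,1) → ℝ of the master ODE (1−τ²)·a″(τ) + 2(p−1)·τ·a′(τ) + (ν(ν+1) − p(p−1))·a(τ) = 0 is the restriction to (−1,1) of a polynomial of degree at most ν + p. In particular every solution extends to a smooth function on an open interval containing [−1,1], i.e. is regular at τ = ±1. -/

import Mathlib

open Polynomial Set

/-- Coefficient sequence of the power-series solution. -/
noncomputable def mcoef (p ν : ℕ) (v0 v1 : ℝ) : ℕ → ℝ
  | 0 => v0
  | 1 => v1
  | (n+2) => (((p : ℝ) - n) * ((p : ℝ) - n - 1) - (ν : ℝ) * ((ν : ℝ) + 1))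
      / (((n : ℝ) + 2) * ((n : ℝ) + 1)) * mcoef p ν v0 v1 n

lemma mcoef_rec (p ν : ℕ) (v0 v1 : ℝ) (n : ℕ) :
    mcoef p ν v0 v1 (n+2) = (((p : ℝ) - n) * ((p : ℝ) - n - 1) - (ν : ℝ) * ((ν : ℝ) + 1))
      / (((n : ℝ) + 2) * ((n : ℝ) + 1)) * mcoef p ν v0 v1 n := rfl

lemma mcoef_chain (p ν : ℕ) (v0 v1 : ℝ) (m : ℕ)
    (hm : ((p : ℝ) - m) * ((p : ℝ) - m - 1) - (ν : ℝ) * ((ν : ℝ) + 1) = 0) :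
    ∀ k, mcoef p ν v0 v1 (m + 2*k + 2) = 0 := by
  intro k
  induction k with
  | zero => simp [mcoef_rec, hm]
  | succ k ih =>
      have : m + 2*(k+1) + 2 = (m + 2*k + 2) + 2 := by ring
      rw [this, mcoef_rec, ih, mul_zero]

lemma mcoef_zero (p ν : ℕ) (hνp : ν < p) (v0 v1 : ℝ) :
    ∀ n, ν + p < n → mcoef p ν v0 v1 n = 0 := by
  intro n hn
  have hcast : ((p - ν - 1 : ℕ) : ℝ) = (p : ℝ) - (ν : ℝ) - 1 := by
    have h1 : ν + 1 ≤ p := hνp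
    rw [Nat.cast_sub (by omega : 1 ≤ p - ν), Nat.cast_sub (by omega : ν ≤ p)]
    push_cast; ring
  have h0 : ((p : ℝ) - (p - ν - 1 : ℕ)) * ((p : ℝ) - (p - ν - 1 : ℕ) - 1)
      - (ν : ℝ) * ((ν : ℝ) + 1) = 0 := by rw [hcast]; ring
  have h1 : ((p : ℝ) - (p + ν : ℕ)) * ((p : ℝ) - (p + ν : ℕ) - 1)
      - (ν : ℝ) * ((ν : ℝ) + 1) = 0 := by push_cast; ring
  rcases Nat.even_or_odd (n - (p + ν)) with he | ho
  · -- same parity as p + ν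
    obtain ⟨k, hk⟩ : ∃ k, n = (p + ν) + 2*k + 2 := by
      obtain ⟨j, hj⟩ := he; exact ⟨(n - (p+ν) - 2)/2, by omega⟩
    rw [hk]; exact mcoef_chain p ν v0 v1 _ h1 k
  · obtain ⟨k, hk⟩ : ∃ k, n = (p - ν - 1) + 2*k + 2 := by
      obtain ⟨j, hj⟩ := ho; exact ⟨(n - (p-ν-1) - 2)/2, by omega⟩
    rw [hk]; exact mcoef_chain p ν v0 v1 _ h0 k

noncomputable def mpoly (p ν : ℕ) (v0 v1 : ℝ) : Polynomial ℝ :=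
  ∑ n ∈ Finset.range (ν + p + 1), Polynomial.monomial n (mcoef p ν v0 v1 n)

lemma mpoly_coeff (p ν : ℕ) (hνp : ν < p) (v0 v1 : ℝ) (n : ℕ) :
    (mpoly p ν v0 v1).coeff n = mcoef p ν v0 v1 n := by
  rw [mpoly, Polynomial.finset_sum_coeff]
  simp only [Polynomial.coeff_monomial]
  rw [Finset.sum_ite_eq' (Finset.range (ν+p+1)) n (fun k => mcoef p ν v0 v1 k)]
  by_cases h : n ∈ Finset.range (ν+p+1)
  · simp [h]
  · simp only [h, if_false]
    exact (mcoef_zero p ν hνp v0 v1 n (by simpa using Nat.lt_of_succ_le (le_of_not_gt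
      (fun hlt => h (Finset.mem_range.mpr hlt))))).symm

lemma mpoly_natDegree (p ν : ℕ) (hνp : ν < p) (v0 v1 : ℝ) :
    (mpoly p ν v0 v1).natDegree ≤ ν + p := by
  rw [Polynomial.natDegree_le_iff_coeff_eq_zero]
  intro m hm
  rw [mpoly_coeff p ν hνp]
  exact mcoef_zero p ν hνp v0 v1 m hm

lemma mpoly_ode (p ν : ℕ) (hνp : ν < p) (v0 v1 : ℝ) :
    Polynomial.derivative (Polynomial.derivative (mpoly p ν v0 v1))
      - Polynomial.derivative (Polynomial.derivative (mpoly p ν v0 v1)) * Polynomial.X ^ 2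
      + Polynomial.C (2*((p:ℝ)-1)) * (Polynomial.derivative (mpoly p ν v0 v1) * Polynomial.X)
      + Polynomial.C ((ν:ℝ)*((ν:ℝ)+1) - (p:ℝ)*((p:ℝ)-1)) * mpoly p ν v0 v1 = 0 := by
  set Q := mpoly p ν v0 v1 with hQ
  have hc : ∀ n, Q.coeff n = mcoef p ν v0 v1 n := mpoly_coeff p ν hνp v0 v1
  ext n
  simp only [Polynomial.coeff_add, Polynomial.coeff_sub, Polynomial.coeff_zero,
    Polynomial.coeff_C_mul]
  match n with
  | 0 =>
      rw [Polynomial.mul_coeff_zero, Polynomial.mul_coeff_zero]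
      simp only [Polynomial.coeff_X_pow, Polynomial.coeff_X_zero]
      simp only [Polynomial.coeff_derivative, hc, mcoef_rec]
      push_cast
      have h2 : ((0:ℝ)+2)*((0:ℝ)+1) ≠ 0 := by norm_num
      field_simp
      ring
  | 1 =>
      have hx2 : (Polynomial.derivative (Polynomial.derivative Q) * Polynomial.X ^ 2).coeff 1
          = 0 := by
        rw [Polynomial.coeff_mul_X_pow']
        norm_num
      have hx1 : (Polynomial.derivative Q * Polynomial.X).coeff 1
          = (Polynomial.derivative Q).coeff 0 := Polynomial.coeff_mul_X _ 0
      rw [hx2, hx1]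
      simp only [Polynomial.coeff_derivative, hc, mcoef_rec]
      push_cast
      field_simp
      ring
  | (m+2) =>
      have hx2 : (Polynomial.derivative (Polynomial.derivative Q) * Polynomial.X ^ 2).coeff (m+2)
          = (Polynomial.derivative (Polynomial.derivative Q)).coeff m :=
        Polynomial.coeff_mul_X_pow _ 2 m
      rw [hx2, show m+2 = (m+1)+1 from rfl, Polynomial.coeff_mul_X]
      simp only [Polynomial.coeff_derivative, hc]
      rw [mcoef_rec p ν v0 v1 (m+2), mcoef_rec p ν v0 v1 m]
      have hden : (((m:ℝ)+2)+2)*(((m:ℝ)+2)+1) ≠ 0 := by positivity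
      have hden2 : ((m:ℝ)+2)*((m:ℝ)+1) ≠ 0 := by positivity
      push_cast
      field_simp
      ring

lemma mpoly_eval_ode (p ν : ℕ) (hνp : ν < p) (v0 v1 : ℝ) (τ : ℝ) :
    (1 - τ^2) * (Polynomial.derivative (Polynomial.derivative (mpoly p ν v0 v1))).eval τ
      + 2*((p:ℝ)-1)*τ * (Polynomial.derivative (mpoly p ν v0 v1)).eval τ
      + ((ν:ℝ)*((ν:ℝ)+1) - (p:ℝ)*((p:ℝ)-1)) * (mpoly p ν v0 v1).eval τ = 0 := by
  have := congrArg (Polynomial.eval τ) (mpoly_ode p ν hνp v0 v1)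
  simp only [Polynomial.eval_add, Polynomial.eval_sub, Polynomial.eval_mul, Polynomial.eval_C,
    Polynomial.eval_pow, Polynomial.eval_X, Polynomial.eval_zero] at this
  linarith [this]

lemma polynomial_contDiff (P : Polynomial ℝ) : ContDiff ℝ (⊤ : ℕ∞) fun x : ℝ => P.eval x := by
  induction P using Polynomial.induction_on' with
  | add p q hp hq => simpa [Polynomial.eval_add] using hp.add hq
  | monomial n c =>
      simpa [Polynomial.eval_monomial] using (contDiff_const (c := c)).mul (contDiff_id.pow n)

lemma mcoef_zeroth (p ν : ℕ) (v0 v1 : ℝ) : mcoef p ν v0 v1 0 = v0 := rfl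
lemma mcoef_oneth (p ν : ℕ) (v0 v1 : ℝ) : mcoef p ν v0 v1 1 = v1 := rfl

/-- for `ν < p`, every twice-differentiable solution of the master ODE on
`(-1,1)` is the restriction of a polynomial of degree at most `ν + p`; in particular it
extends to a smooth function past `τ = ±1`. -/
theorem stmt_4 (p ν : ℕ) (hνp : ν < p) (a : ℝ → ℝ)
    (hdiff : ∀ τ ∈ Set.Ioo (-1 : ℝ) 1,
      DifferentiableAt ℝ a τ ∧ DifferentiableAt ℝ (deriv a) τ)
    (hode : ∀ τ ∈ Set.Ioo (-1 : ℝ) 1,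
      (1 - τ ^ 2) * deriv (deriv a) τ + 2 * ((p : ℝ) - 1) * τ * deriv a τ
        + ((ν : ℝ) * ((ν : ℝ) + 1) - (p : ℝ) * ((p : ℝ) - 1)) * a τ = 0) :
    (∃ P : Polynomial ℝ, P.natDegree ≤ ν + p ∧
      ∀ τ ∈ Set.Ioo (-1 : ℝ) 1, a τ = P.eval τ) ∧
    (∃ g : ℝ → ℝ, ContDiff ℝ (⊤ : ℕ∞) g ∧ ∀ τ ∈ Set.Ioo (-1 : ℝ) 1, a τ = g τ) := by
  set P : Polynomial ℝ := mpoly p ν (a 0) (deriv a 0) with hP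
  have key : ∀ τ ∈ Set.Ioo (-1 : ℝ) 1, a τ = P.eval τ := by
    intro τ' hτ'
    -- set up a compact window containing 0 and τ'
    set R : ℝ := (1 + |τ'|) / 2 with hR
    have habs : |τ'| < 1 := abs_lt.mpr ⟨hτ'.1, hτ'.2⟩
    have hR1 : R < 1 := by rw [hR]; linarith
    have hRpos : 0 < R := by rw [hR]; positivity
    have hτR : τ' ∈ Ioo (-R) R := by
      constructor
      · have := neg_abs_le τ'; rw [hR]; nlinarith [abs_nonneg τ']
      · have := le_abs_self τ'; rw [hR]; linarith
    have h0R : (0:ℝ) ∈ Ioo (-R) R := ⟨by linarith, hRpos⟩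
    have hsub : Ioo (-R) R ⊆ Ioo (-1 : ℝ) 1 :=
      Ioo_subset_Ioo (by linarith) (by linarith)
    -- clamp function
    set cl : ℝ → ℝ := fun t => max (-R) (min R t) with hcl
    have hcl_mem : ∀ t, cl t ∈ Icc (-R) R := by
      intro t
      refine ⟨le_max_left _ _, max_le (by linarith) (min_le_left _ _)⟩
    have hcl_eq : ∀ t ∈ Ioo (-R) R, cl t = t := by
      intro t ht
      rw [hcl]
      simp only
      rw [min_eq_right ht.2.le, max_eq_right ht.1.le]
    have hclden : ∀ t, 1 - R^2 ≤ 1 - cl t ^ 2 := by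
      intro t
      have h := hcl_mem t
      have : cl t ^ 2 ≤ R ^ 2 := sq_le_sq' h.1 h.2
      linarith
    have hRden : (0:ℝ) < 1 - R^2 := by nlinarith
    -- the vector field
    set c0 : ℝ := (p:ℝ)*((p:ℝ)-1) - (ν:ℝ)*((ν:ℝ)+1) with hc0
    set A : ℝ → ℝ := fun t => c0 / (1 - cl t ^ 2) with hA
    set B : ℝ → ℝ := fun t => (-(2*((p:ℝ)-1)) * cl t) / (1 - cl t ^ 2) with hB
    set v : ℝ → ℝ × ℝ → ℝ × ℝ := fun t x => (x.2, A t * x.1 + B t * x.2) with hv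
    set MA : ℝ := |c0| / (1 - R^2) with hMA
    set MB : ℝ := (2*|(p:ℝ)-1|) * R / (1 - R^2) with hMB
    have hMA0 : 0 ≤ MA := by rw [hMA]; positivity
    have hMB0 : 0 ≤ MB := by rw [hMB]; positivity
    have hAbd : ∀ t, |A t| ≤ MA := by
      intro t
      rw [hA, hMA]
      simp only
      rw [abs_div, abs_of_pos (lt_of_lt_of_le hRden (hclden t))]
      exact div_le_div_of_nonneg_left (abs_nonneg _) hRden (hclden t)
    have hBbd : ∀ t, |B t| ≤ MB := by
      intro t
      rw [hB, hMB]
      simp only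
      rw [abs_div, abs_of_pos (lt_of_lt_of_le hRden (hclden t)), abs_mul, abs_neg]
      have h1 : |cl t| ≤ R := abs_le.mpr ⟨(hcl_mem t).1, (hcl_mem t).2⟩
      have h2 : |2*((p:ℝ)-1)| = 2*|(p:ℝ)-1| := by rw [abs_mul]; norm_num
      rw [h2]
      calc 2*|(p:ℝ)-1| * |cl t| / (1 - cl t ^ 2)
          ≤ 2*|(p:ℝ)-1| * R / (1 - cl t ^ 2) := by
            have hd : (0:ℝ) < 1 - cl t ^ 2 := lt_of_lt_of_le hRden (hclden t)
            gcongr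
        _ ≤ 2*|(p:ℝ)-1| * R / (1 - R ^ 2) :=
            div_le_div_of_nonneg_left (by positivity) hRden (hclden t)
    -- Lipschitz bound
    set K : NNReal := ⟨max 1 (MA + MB), le_trans zero_le_one (le_max_left _ _)⟩ with hK
    have hlip : ∀ t, LipschitzOnWith K (v t) univ := by
      intro t
      apply LipschitzWith.lipschitzOnWith
      apply LipschitzWith.of_dist_le_mul
      intro x y
      have hKc : (K : ℝ) = max 1 (MA + MB) := rfl
      rw [Prod.dist_eq, Prod.dist_eq, hKc]
      simp only [hv, Real.dist_eq]
      apply max_le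
      · calc |x.2 - y.2| ≤ max |x.1 - y.1| |x.2 - y.2| := le_max_right _ _
          _ ≤ max 1 (MA+MB) * max |x.1 - y.1| |x.2 - y.2| := by
              nlinarith [le_max_left 1 (MA+MB), abs_nonneg (x.1-y.1), abs_nonneg (x.2-y.2),
                le_max_left |x.1-y.1| |x.2-y.2|, le_max_right |x.1-y.1| |x.2-y.2|]
      · have e : A t * x.1 + B t * x.2 - (A t * y.1 + B t * y.2)
            = A t * (x.1 - y.1) + B t * (x.2 - y.2) := by ring
        rw [e]
        calc |A t * (x.1 - y.1) + B t * (x.2 - y.2)|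
            ≤ |A t| * |x.1 - y.1| + |B t| * |x.2 - y.2| := by
              refine (abs_add_le _ _).trans ?_
              rw [abs_mul, abs_mul]
          _ ≤ MA * max |x.1 - y.1| |x.2 - y.2| + MB * max |x.1 - y.1| |x.2 - y.2| := by
              have g1 : |A t| * |x.1 - y.1| ≤ MA * max |x.1 - y.1| |x.2 - y.2| :=
                mul_le_mul (hAbd t) (le_max_left _ _) (abs_nonneg _) hMA0
              have g2 : |B t| * |x.2 - y.2| ≤ MB * max |x.1 - y.1| |x.2 - y.2| :=
                mul_le_mul (hBbd t) (le_max_right _ _) (abs_nonneg _) hMB0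
              linarith
          _ = (MA + MB) * max |x.1 - y.1| |x.2 - y.2| := by ring
          _ ≤ max 1 (MA+MB) * max |x.1 - y.1| |x.2 - y.2| := by
              have := le_max_right 1 (MA+MB)
              have h0 : (0:ℝ) ≤ max |x.1 - y.1| |x.2 - y.2| :=
                le_trans (abs_nonneg _) (le_max_left _ _)
              nlinarith
    -- the two solutions as ℝ² valued curves
    set f : ℝ → ℝ × ℝ := fun t => (a t, deriv a t) with hf
    set g : ℝ → ℝ × ℝ := fun t => (P.eval t, P.derivative.eval t) with hg
    have hfsol : ∀ t ∈ Ioo (-R) R, HasDerivAt f (v t (f t)) t ∧ f t ∈ univ := by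
      intro t ht
      refine ⟨?_, trivial⟩
      have ht1 : t ∈ Ioo (-1:ℝ) 1 := hsub ht
      have h1t2 : (1:ℝ) - t^2 ≠ 0 := by
        have : t^2 < 1 := by nlinarith [ht1.1, ht1.2]
        linarith
      have hd1 : HasDerivAt a (deriv a t) t := (hdiff t ht1).1.hasDerivAt
      have hd2 : HasDerivAt (deriv a) (deriv (deriv a) t) t := (hdiff t ht1).2.hasDerivAt
      have hpair : HasDerivAt f (deriv a t, deriv (deriv a) t) t := hd1.prodMk hd2
      have hveq : v t (f t) = (deriv a t, deriv (deriv a) t) := by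
        have hct : cl t = t := hcl_eq t ht
        have hode' := hode t ht1
        refine Prod.ext rfl ?_
        show A t * a t + B t * deriv a t = deriv (deriv a) t
        rw [hA, hB]
        simp only [hct, hc0]
        field_simp
        linarith [hode']
      rw [hveq]
      exact hpair
    have hgsol : ∀ t ∈ Ioo (-R) R, HasDerivAt g (v t (g t)) t ∧ g t ∈ univ := by
      intro t ht
      refine ⟨?_, trivial⟩
      have ht1 : t ∈ Ioo (-1:ℝ) 1 := hsub ht
      have h1t2 : (1:ℝ) - t^2 ≠ 0 := by
        have : t^2 < 1 := by nlinarith [ht1.1, ht1.2]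
        linarith
      have hd1 : HasDerivAt (fun x : ℝ => P.eval x) (P.derivative.eval t) t := P.hasDerivAt t
      have hd2 : HasDerivAt (fun x : ℝ => P.derivative.eval x)
          (P.derivative.derivative.eval t) t := P.derivative.hasDerivAt t
      have hpair : HasDerivAt g (P.derivative.eval t, P.derivative.derivative.eval t) t :=
        hd1.prodMk hd2
      have hveq : v t (g t) = (P.derivative.eval t, P.derivative.derivative.eval t) := by
        have hct : cl t = t := hcl_eq t ht
        have hodeP := mpoly_eval_ode p ν hνp (a 0) (deriv a 0) t
        refine Prod.ext rfl ?_
        show A t * P.eval t + B t * P.derivative.eval t = P.derivative.derivative.eval t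
        rw [hA, hB]
        simp only [hct, hc0]
        field_simp
        rw [hP]
        linarith [hodeP]
      rw [hveq]
      exact hpair
    have heq0 : f 0 = g 0 := by
      have h0 : P.eval 0 = a 0 := by
        rw [← Polynomial.coeff_zero_eq_eval_zero, hP, mpoly_coeff p ν hνp, mcoef_zeroth]
      have h1 : P.derivative.eval 0 = deriv a 0 := by
        rw [← Polynomial.coeff_zero_eq_eval_zero, Polynomial.coeff_derivative, hP,
          mpoly_coeff p ν hνp, mcoef_oneth]
        norm_num
      rw [hf, hg]
      simp [h0, h1]
    have := ODE_solution_unique_of_mem_Ioo (fun t _ => hlip t) h0R hfsol hgsol heq0 hτR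
    have := congrArg Prod.fst this
    simpa [hf, hg] using this
  refine ⟨⟨P, mpoly_natDegree p ν hνp _ _, key⟩, ⟨fun τ => P.eval τ, polynomial_contDiff P, key⟩⟩
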